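/- If a pseudotree T1 is mergeable to a pseudotree T2, then the union graph T3 = (V(T1) ∪ V(T2), E(T1) ∪ E(T2)) is a pseudotree whose set of roots contains the set of roots of T2, i.e., Υ(T3) ⊇ Υ(T2). -/
import Mathlib


/-- A finite simple directed graph: a finite vertex set, a finite set of directed
edges (ordered pairs) between vertices, with no self-loops. Since `edges` is a
`Finset`, there are no repeated edges. -/
structure FinDigraph (V : Type*) [DecidableEq V] where
  verts : Finset V
  edges : Finset (V × V)
  mem_fst : ∀ e ∈ edges, e.1 ∈ verts
  mem_snd : ∀ e ∈ edges, e.2 ∈ verts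
  no_loops : ∀ e ∈ edges, e.1 ≠ e.2

namespace FinDigraph

variable {V : Type*} [DecidableEq V]

/-- Adjacency in the underlying undirected graph. -/
def Adj (G : FinDigraph V) (a b : V) : Prop := (a, b) ∈ G.edges ∨ (b, a) ∈ G.edges

/-- `G` is connected if its underlying undirected graph is connected. -/
def Connected (G : FinDigraph V) : Prop :=
  G.verts.Nonempty ∧ ∀ u ∈ G.verts, ∀ v ∈ G.verts, Relation.ReflTransGen G.Adj u v

/-- The set of in-neighbors of `j`. -/
def inNbrs (G : FinDigraph V) (j : V) : Finset V := G.verts.filter fun i => (i, j) ∈ G.edges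

/-- The set of out-neighbors of `j`. -/
def outNbrs (G : FinDigraph V) (j : V) : Finset V := G.verts.filter fun i => (j, i) ∈ G.edges

/-- The sinks of `G`: vertices without out-neighbors. -/
def sinks (G : FinDigraph V) : Finset V := G.verts.filter fun j => G.outNbrs j = ∅

/-- The sources of `G`: vertices without in-neighbors. -/
def sources (G : FinDigraph V) : Finset V := G.verts.filter fun j => G.inNbrs j = ∅

def IsSubgraph (H G : FinDigraph V) : Prop := H.verts ⊆ G.verts ∧ H.edges ⊆ G.edges

/-- A (directed) pseudotree: a connected simple directed graph with at least two
vertices in which every vertex has at most one in-neighbor. -/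
def IsPseudotree (T : FinDigraph V) : Prop :=
  T.Connected ∧ 2 ≤ T.verts.card ∧ ∀ j ∈ T.verts, (T.inNbrs j).card ≤ 1

/-- An anti-pseudotree: a connected simple directed graph with at least two
vertices in which every vertex has at most one out-neighbor. -/
def IsAntiPseudotree (T : FinDigraph V) : Prop :=
  T.Connected ∧ 2 ≤ T.verts.card ∧ ∀ j ∈ T.verts, (T.outNbrs j).card ≤ 1

/-- `l` is the list of vertices visited by a directed path from `u` to `v`:
consecutive vertices are joined by directed edges, and no vertex repeats. -/
def IsPath (G : FinDigraph V) (u v : V) (l : List V) : Prop :=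
  l ≠ [] ∧ l.Chain' (fun a b => (a, b) ∈ G.edges) ∧ l.Nodup ∧
    l.head? = some u ∧ l.getLast? = some v

/-- `r` is a root of `T` if there is exactly one directed path from `r`
to every other vertex of `T`. -/
def IsRoot (T : FinDigraph V) (r : V) : Prop :=
  r ∈ T.verts ∧ ∀ v ∈ T.verts, v ≠ r → ∃! l : List V, T.IsPath r v l

/-- `Υ(T)`: the set of roots of `T`. -/
def roots (T : FinDigraph V) : Set V := {r | T.IsRoot r}

/-- A leaf: a vertex of `T` without out-neighbors in `T`. -/
def IsLeaf (T : FinDigraph V) (v : V) : Prop := v ∈ T.verts ∧ T.outNbrs v = ∅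

/-- The edges of `E` outgoing from `j`. -/
def outEdges (E : Finset (V × V)) (j : V) : Finset (V × V) := E.filter fun e => e.1 = j

/-- The edges of `E` incoming to (ending at) `j`. -/
def inEdges (E : Finset (V × V)) (j : V) : Finset (V × V) := E.filter fun e => e.2 = j

/-- Two pseudotrees are disjoint if (1) they share no edges and (2) for every
vertex of their union, all outgoing edges (within the union of the edge sets)
belong to one and the same pseudotree. -/
def DisjointPTrees (T1 T2 : FinDigraph V) : Prop :=
  T1.edges ∩ T2.edges = ∅ ∧
  ∀ j ∈ T1.verts ∪ T2.verts,
    outEdges (T1.edges ∪ T2.edges) j ⊆ T1.edges ∨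
    outEdges (T1.edges ∪ T2.edges) j ⊆ T2.edges

/-- Two anti-pseudotrees are disjoint if they share no edges and, for every
vertex of their union, all incoming edges of that vertex are in a single one
of the two anti-pseudotrees. -/
def DisjointAntiPTrees (T1 T2 : FinDigraph V) : Prop :=
  T1.edges ∩ T2.edges = ∅ ∧
  ∀ j ∈ T1.verts ∪ T2.verts,
    inEdges (T1.edges ∪ T2.edges) j ⊆ T1.edges ∨
    inEdges (T1.edges ∪ T2.edges) j ⊆ T2.edges

/-- The union of two digraphs. -/
def union (T1 T2 : FinDigraph V) : FinDigraph V where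
  verts := T1.verts ∪ T2.verts
  edges := T1.edges ∪ T2.edges
  mem_fst := fun e he => by
    rcases Finset.mem_union.mp he with h | h
    · exact Finset.mem_union_left _ (T1.mem_fst e h)
    · exact Finset.mem_union_right _ (T2.mem_fst e h)
  mem_snd := fun e he => by
    rcases Finset.mem_union.mp he with h | h
    · exact Finset.mem_union_left _ (T1.mem_snd e h)
    · exact Finset.mem_union_right _ (T2.mem_snd e h)
  no_loops := fun e he => by
    rcases Finset.mem_union.mp he with h | h
    · exact T1.no_loops e h
    · exact T2.no_loops e h

/-- `T1` is mergeable to `T2`: they are disjoint pseudotrees sharing a vertex,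
their union graph is a pseudotree, and there is a directed path (in the union)
from every root of `T2` to every vertex of `T1`. -/
def Mergeable (T1 T2 : FinDigraph V) : Prop :=
  DisjointPTrees T1 T2 ∧ (T1.verts ∩ T2.verts).Nonempty ∧
  IsPseudotree (union T1 T2) ∧
  ∀ r ∈ roots T2, ∀ v ∈ T1.verts, ∃ l : List V, (union T1 T2).IsPath r v l

/-- The minimal star pseudotree rooted at `j`: vertex `j` together with all its
out-neighbors in `G`, and all the edges of `G` outgoing from `j`. -/
def star (G : FinDigraph V) (j : V) : FinDigraph V where
  verts := insert j (G.outNbrs j)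
  edges := G.edges.filter fun e => e.1 = j
  mem_fst := fun e he => by
    have h := Finset.mem_filter.mp he
    simp [h.2]
  mem_snd := fun e he => by
    have h := Finset.mem_filter.mp he
    have h2 : e.2 ∈ G.outNbrs j := by
      refine Finset.mem_filter.mpr ⟨G.mem_snd e h.1, ?_⟩
      have he' : e = (j, e.2) := by
        obtain ⟨a, b⟩ := e
        simp only at h ⊢
        rw [h.2]
      rw [← he']
      exact h.1
    exact Finset.mem_insert_of_mem h2
  no_loops := fun e he => G.no_loops e (Finset.mem_filter.mp he).1

/-- The minimal anti-star rooted at `j`: vertex `j` together with all its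
in-neighbors in `G`, and all the edges of `G` incoming to `j`. -/
def antiStar (G : FinDigraph V) (j : V) : FinDigraph V where
  verts := insert j (G.inNbrs j)
  edges := G.edges.filter fun e => e.2 = j
  mem_fst := fun e he => by
    have h := Finset.mem_filter.mp he
    have h2 : e.1 ∈ G.inNbrs j := by
      refine Finset.mem_filter.mpr ⟨G.mem_fst e h.1, ?_⟩
      have he' : e = (e.1, j) := by
        obtain ⟨a, b⟩ := e
        simp only at h ⊢
        rw [h.2]
      rw [← he']
      exact h.1
    exact Finset.mem_insert_of_mem h2
  mem_snd := fun e he => by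
    have h := Finset.mem_filter.mp he
    simp [h.2]
  no_loops := fun e he => G.no_loops e (Finset.mem_filter.mp he).1

end FinDigraph

/-- The three-element set `𝕄 = {1, 0, ∅}`. -/
inductive MSym : Type
  | one
  | zero
  | emp
deriving DecidableEq

/-- The commutative operator `⊙` on `𝕄`:
`1⊙1 = 1`, `1⊙0 = 0`, `1⊙∅ = 1`, `0⊙0 = 0`, `∅⊙0 = 0`, `∅⊙∅ = ∅`. -/
def modot : MSym → MSym → MSym
  | .zero, _ => .zero
  | _, .zero => .zero
  | .one, _ => .one
  | _, .one => .one
  | .emp, .emp => .emp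

open Classical in
/-- The characteristic matrix of a (disjoint pseudotree) covering `T`:
entry `(i,j)` is `1` if `T i` is mergeable to `T j`, `∅` if they share no
vertices, and `0` otherwise. -/
noncomputable def charMat {V : Type*} [DecidableEq V] {ι : Type*} (T : ι → FinDigraph V) :
    ι → ι → MSym := fun i j =>
  if FinDigraph.Mergeable (T i) (T j) then .one
  else if (T i).verts ∩ (T j).verts = ∅ then .emp
  else .zero

/-- The reduction `F(M, i, j)`: replace row `j` by (row `i`) ⊙ (row `j`),
replace column `j` by (column `i`) ⊙ (column `j`), then delete row and
column `i`. -/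
def reduceF {n : ℕ} (M : Fin n → Fin n → MSym) (i j : Fin n) :
    {k : Fin n // k ≠ i} → {k : Fin n // k ≠ i} → MSym := fun a b =>
  let M1 : Fin n → Fin n → MSym := fun p q => if p = j then modot (M i q) (M j q) else M p q
  let M2 : Fin n → Fin n → MSym := fun p q => if q = j then modot (M1 p i) (M1 p j) else M1 p q
  M2 a.val b.val

lemma mem_of_getLast?_eq {V : Type*} {l : List V} {r : V}
    (h : l.getLast? = some r) : r ∈ l := by
  obtain ⟨hne, hx⟩ := List.mem_getLast?_eq_getLast (Option.mem_def.mpr h)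
  exact hx ▸ List.getLast_mem hne

lemma rpath_unique {V : Type*} [DecidableEq V] (G : FinDigraph V)
    (hdeg : ∀ j ∈ G.verts, (G.inNbrs j).card ≤ 1) :
    ∀ (m1 m2 : List V) (r v : V),
      m1.Chain' (fun a b => (b, a) ∈ G.edges) → m2.Chain' (fun a b => (b, a) ∈ G.edges) →
      m1.Nodup → m2.Nodup →
      m1.head? = some v → m2.head? = some v →
      m1.getLast? = some r → m2.getLast? = some r → m1 = m2 := by
  intro m1
  induction m1 with
  | nil => intro m2 r v _ _ _ _ h1; simp at h1
  | cons a t ih =>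
    intro m2 r v c1 c2 n1 n2 h1 h2 g1 g2
    cases m2 with
    | nil => simp at h2
    | cons b s =>
      have hav : a = v := by simpa using h1
      have hbv : b = v := by simpa using h2
      have hba : b = a := hbv.trans hav.symm
      cases t with
      | nil =>
        cases s with
        | nil => rw [hba]
        | cons b2 s2 =>
          exfalso
          have har : a = r := by simpa using g1
          have hmem : r ∈ b2 :: s2 :=
            mem_of_getLast?_eq
              ((List.getLast?_cons_cons (a := b) (b := b2) (l := s2)) ▸ g2)
          have hbr : b = r := hba.trans har
          exact (List.nodup_cons.mp n2).1 (hbr.symm ▸ hmem)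
      | cons a2 t2 =>
        cases s with
        | nil =>
          exfalso
          have hbr : b = r := by simpa using g2
          have hmem : r ∈ a2 :: t2 :=
            mem_of_getLast?_eq
              ((List.getLast?_cons_cons (a := a) (b := a2) (l := t2)) ▸ g1)
          have har : a = r := hba.symm.trans hbr
          exact (List.nodup_cons.mp n1).1 (har.symm ▸ hmem)
        | cons b2 s2 =>
          have e1 : (a2, a) ∈ G.edges := (List.isChain_cons_cons.mp c1).1
          have e2 : (b2, b) ∈ G.edges := (List.isChain_cons_cons.mp c2).1
          have e2' : (b2, a) ∈ G.edges := hba ▸ e2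
          have hv : a ∈ G.verts := G.mem_snd _ e1
          have ha2 : a2 ∈ G.inNbrs a :=
            Finset.mem_filter.mpr ⟨G.mem_fst _ e1, e1⟩
          have hb2 : b2 ∈ G.inNbrs a :=
            Finset.mem_filter.mpr ⟨G.mem_fst _ e2', e2'⟩
          have hab : a2 = b2 := Finset.card_le_one.mp (hdeg a hv) _ ha2 _ hb2
          have htail : a2 :: t2 = b2 :: s2 := by
            refine ih (b2 :: s2) r a2 (List.isChain_cons_cons.mp c1).2
              (List.isChain_cons_cons.mp c2).2 (List.nodup_cons.mp n1).2
              (List.nodup_cons.mp n2).2 rfl ?_ ?_ ?_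
            · rw [← hab]; rfl
            · exact (List.getLast?_cons_cons (a := a) (b := a2) (l := t2)) ▸ g1
            · exact (List.getLast?_cons_cons (a := b) (b := b2) (l := s2)) ▸ g2
          rw [← hba, htail]

lemma path_unique {V : Type*} [DecidableEq V] (G : FinDigraph V)
    (hdeg : ∀ j ∈ G.verts, (G.inNbrs j).card ≤ 1) {r v : V} {l1 l2 : List V}
    (h1 : G.IsPath r v l1) (h2 : G.IsPath r v l2) : l1 = l2 := by
  obtain ⟨-, c1, n1, hd1, gl1⟩ := h1
  obtain ⟨-, c2, n2, hd2, gl2⟩ := h2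
  have hrev : l1.reverse = l2.reverse := by
    refine rpath_unique G hdeg l1.reverse l2.reverse r v ?_ ?_ ?_ ?_ ?_ ?_ ?_ ?_
    · exact List.isChain_reverse.mpr c1
    · exact List.isChain_reverse.mpr c2
    · exact List.nodup_reverse.mpr n1
    · exact List.nodup_reverse.mpr n2
    · rwa [List.head?_reverse]
    · rwa [List.head?_reverse]
    · rwa [List.getLast?_reverse]
    · rwa [List.getLast?_reverse]
  exact List.reverse_injective hrev

/-- if a pseudotree `T1` is mergeable to a pseudotree `T2`, then the
union graph is a pseudotree whose set of roots contains the set of roots of `T2`. -/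
theorem statement_11 {V : Type*} [DecidableEq V] (T1 T2 : FinDigraph V)
    (h1 : T1.IsPseudotree) (h2 : T2.IsPseudotree)
    (hm : FinDigraph.Mergeable T1 T2) :
    (FinDigraph.union T1 T2).IsPseudotree ∧
      T2.roots ⊆ (FinDigraph.union T1 T2).roots := by
  obtain ⟨hdisj, hnonempty, hptree, hpaths⟩ := hm
  refine ⟨hptree, fun r hr => ?_⟩
  have hdeg := hptree.2.2
  obtain ⟨hrmem, hroot⟩ := hr
  refine ⟨Finset.mem_union_right _ hrmem, fun v hv hne => ?_⟩
  have hexists : ∃ l : List V, (FinDigraph.union T1 T2).IsPath r v l := by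
    rcases Finset.mem_union.mp hv with hv1 | hv2
    · exact hpaths r ⟨hrmem, hroot⟩ v hv1
    · obtain ⟨l, hl, -⟩ := hroot v hv2 hne
      obtain ⟨hne', hc, hnd, hhd, hgl⟩ := hl
      refine ⟨l, hne', ?_, hnd, hhd, hgl⟩
      exact hc.imp fun a b hab => Finset.mem_union_right _ hab
  obtain ⟨l, hl⟩ := hexists
  exact ⟨l, hl, fun l' hl' => path_unique _ hdeg hl' hl⟩
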